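/- Let n ≥ 1, let v, w : {1,…,n} → ℕ with vᵢ ≥ 1 and wᵢ ≥ 1 for all i, let v₀, w₀ ∈ ℕ, and set V = Σᵢ₌₁ⁿ vᵢ. Assume v₀ < V and 2·v₀ ≤ V. Let ε be a real number with 0 < ε ≤ 1/3 and set m = ε/(V − v₀). Consider the Markov chain with state set S = {ŝ, s₋} ∪ {(i,j) | 1 ≤ i ≤ n, 1 ≤ j ≤ wᵢ}, initial state ŝ, and transitions δ(ŝ) = Σᵢ₌₁ⁿ m·vᵢ·δ_{(i,1)} + (1 − m·V)·δ_{s₋}, δ((i,j)) = δ_{(i,j+1)} for 1 ≤ j < wᵢ, and δ((i,wᵢ)) = δ_{(i,wᵢ)} and δ(s₋) = δ_{s₋} (absorbing). Then this Markov chain has an ε-core of cardinality at most w₀ + 1 if and only if there exists a set I ⊆ {1,…,n} with Σ_{i∈I} vᵢ > v₀ and Σ_{i∈I} wᵢ < w₀. -/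

import Mathlib

/-!
From `ŝ` the chain moves to `s₋` or to the first state of an item chain, and it is
deterministic afterwards, so `P ŝ` is concentrated on `n + 1` paths, of probabilities
`1 - m·V ≥ ε` (the path to the sink) and `m·vᵢ` (the path through the chain of item `i`).
Hence an `ε`-core contains `ŝ` and `s₋`, and a set `C` containing them is an `ε`-core iff the
items whose chains are not contained in `C` have total value `< V - v₀ = ε / m`. So the items
whose chains lie in a small core form a knapsack solution, and conversely a solution `I` gives
the core `{ŝ, s₋} ∪ {(i, j) | i ∈ I}` of size `Σ_{i∈I} wᵢ + 2`.
-/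

open MeasureTheory

/-- A Markov chain: an initial state and a transition distribution for each state. -/
structure MC (S : Type*) where
  init : S
  trans : S → PMF S

/-- The space of infinite paths `s₀ s₁ s₂ ⋯` of a Markov chain. -/
def MCTraj (S : Type*) := ℕ → S

instance {S : Type*} : MeasurableSpace (MCTraj S) :=
  @MeasurableSpace.pi ℕ (fun _ => S) (fun _ => ⊤)

variable {S : Type*}

/-- The probability that a path of the chain starting in state `s` begins with exactly the
finite sequence `pre` of states. -/
noncomputable def mcCylProb [DecidableEq S] (M : MC S) : S → List S → ENNReal
  | _, [] => 1
  | s, t :: rest =>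
      (if t = s then 1 else 0) * ∑' s' : S, (M.trans s) s' * mcCylProb M s' rest

/-- The cylinder set of all infinite paths whose first coordinates agree with `pre`. -/
def MCCyl (pre : List S) : Set (MCTraj S) :=
  {ω | ∀ i : Fin pre.length, ω i = pre.get i}

/-- `P` is the family of path measures of `M` induced (via the Ionescu–Tulcea construction)
by the start states: each `P s` is a probability measure on infinite paths starting in `s`
whose value on every cylinder is the product of the transition probabilities. -/
def IsMCPathMeasure [DecidableEq S] (M : MC S) (P : S → Measure (MCTraj S)) : Prop :=
  (∀ s, IsProbabilityMeasure (P s)) ∧ ∀ s pre, P s (MCCyl pre) = mcCylProb M s pre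

/-- The set of paths that visit `R` at some point. -/
def MCReach (R : Set S) : Set (MCTraj S) := {ω | ∃ i, ω i ∈ R}

/-- `C` is an `ε`-core of the chain: the probability of ever leaving `C` is `< ε`. -/
def IsMCCore [DecidableEq S] (M : MC S) (P : S → Measure (MCTraj S)) (ε : ℝ)
    (C : Set S) : Prop :=
  P M.init (MCReach Cᶜ) < ENNReal.ofReal ε

/-- `C` is a minimal `ε`-core: it is an `ε`-core and no proper subset of it is one. -/
def IsMinimalMCCore [DecidableEq S] (M : MC S) (P : S → Measure (MCTraj S)) (ε : ℝ)
    (C : Set S) : Prop :=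
  IsMCCore M P ε C ∧ ∀ C' ⊂ C, ¬ IsMCCore M P ε C'

/-- The states of the knapsack chain: `none` is the initial state `ŝ`, `some none` is the
sink `s₋`, and `some (some ⟨i, j⟩)` is the `j`-th state of the chain of the `i`-th item. -/
abbrev KSState (n : ℕ) (w : Fin n → ℕ) := Option (Option ((i : Fin n) × Fin (w i)))

/-- The successor weights of the initial state `ŝ`: weight `m·vᵢ` on the first state of
item `i` (where `m = ε/(V − v₀)` and `V = Σᵢ vᵢ`) and weight `1 − m·V` on the sink. -/
noncomputable def ksWeight (n : ℕ) (v w : Fin n → ℕ) (v0 : ℕ) (ε : ℝ) :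
    KSState n w → ENNReal
  | none => 0
  | some none =>
      1 - ENNReal.ofReal (ε / (((∑ i, v i : ℕ) : ℝ) - (v0 : ℝ))) * ((∑ i, v i : ℕ) : ENNReal)
  | some (some ⟨i, j⟩) =>
      if (j : ℕ) = 0 then
        ENNReal.ofReal (ε / (((∑ i, v i : ℕ) : ℝ) - (v0 : ℝ))) * ((v i : ℕ) : ENNReal)
      else 0

lemma ksWeight_sum (n : ℕ) (v w : Fin n → ℕ) (v0 : ℕ) (ε : ℝ)
    (hw : ∀ i, 1 ≤ w i) (hv0 : v0 < ∑ i, v i) (h2 : 2 * v0 ≤ ∑ i, v i)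
    (hε1 : 0 < ε) (hε2 : ε ≤ 1 / 3) :
    ∑ t : KSState n w, ksWeight n v w v0 ε t = 1 := by
  classical
  set V : ℕ := ∑ i, v i with hV
  set m : ℝ := ε / ((V : ℝ) - (v0 : ℝ)) with hm
  set x : ENNReal := ENNReal.ofReal m with hx
  have hVv : (0 : ℝ) < (V : ℝ) - (v0 : ℝ) := by
    have : (v0 : ℝ) < (V : ℝ) := by exact_mod_cast hv0
    linarith
  have hm0 : 0 ≤ m := le_of_lt (div_pos hε1 hVv)
  -- the inner sums over each item chain
  have hinner : ∀ i : Fin n,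
      (∑ j : Fin (w i),
        ksWeight n v w v0 ε (some (some ⟨i, j⟩))) = x * ((v i : ℕ) : ENNReal) := by
    intro i
    have h0 : 0 < w i := hw i
    rw [Finset.sum_eq_single (⟨0, h0⟩ : Fin (w i))]
    · simp only [ksWeight, if_true]; rfl
    · intro b _ hb
      have hb0 : (b : ℕ) ≠ 0 := fun hc => hb (Fin.ext hc)
      simp [ksWeight, hb0]
    · intro h; exact absurd (Finset.mem_univ _) h
  have hsum_sigma :
      (∑ t : (i : Fin n) × Fin (w i), ksWeight n v w v0 ε (some (some t)))
        = x * (V : ENNReal) := by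
    rw [← Finset.univ_sigma_univ, Finset.sum_sigma]
    calc (∑ i : Fin n, ∑ j : Fin (w i), ksWeight n v w v0 ε (some (some ⟨i, j⟩)))
        = ∑ i : Fin n, x * ((v i : ℕ) : ENNReal) := by
          exact Finset.sum_congr rfl fun i _ => hinner i
      _ = x * ∑ i : Fin n, ((v i : ℕ) : ENNReal) := by rw [Finset.mul_sum]
      _ = x * (V : ENNReal) := by rw [hV]; push_cast; ring
  have hxV : x * (V : ENNReal) ≤ 1 := by
    have hVcast : ((V : ℕ) : ENNReal) = ENNReal.ofReal (V : ℝ) := by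
      rw [ENNReal.ofReal_natCast]
    have hmV : m * (V : ℝ) ≤ 1 := by
      rw [hm, div_mul_eq_mul_div, div_le_one hVv]
      have hV0 : (0 : ℝ) ≤ (V : ℝ) := Nat.cast_nonneg _
      have h2' : (V : ℝ) ≤ 2 * ((V : ℝ) - (v0 : ℝ)) := by
        have : 2 * (v0 : ℝ) ≤ (V : ℝ) := by exact_mod_cast h2
        linarith
      have hεV : ε * (V : ℝ) ≤ 1 / 3 * (V : ℝ) := mul_le_mul_of_nonneg_right hε2 hV0
      linarith
    rw [hx, hVcast, ← ENNReal.ofReal_mul hm0]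
    exact ENNReal.ofReal_le_one.mpr hmV
  rw [Fintype.sum_option, Fintype.sum_option, hsum_sigma]
  have h1 : ksWeight n v w v0 ε none = 0 := rfl
  have h2' : ksWeight n v w v0 ε (some none) = 1 - x * (V : ENNReal) := rfl
  rw [h1, h2', zero_add, tsub_add_cancel_of_le hxV]

/-- The Markov chain used in the reduction from 0/1-Knapsack to finding small cores:
`δ(ŝ) = Σᵢ m·vᵢ·δ_{(i,1)} + (1 − m·V)·δ_{s₋}` with `m = ε/(V − v₀)`, the states of each
item chain lead deterministically to the next one, and the last state of each item chain
as well as the sink are absorbing. -/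
noncomputable def knapsackChain (n : ℕ) (v w : Fin n → ℕ) (v0 : ℕ) (ε : ℝ)
    (hw : ∀ i, 1 ≤ w i) (hv0 : v0 < ∑ i, v i) (h2 : 2 * v0 ≤ ∑ i, v i)
    (hε1 : 0 < ε) (hε2 : ε ≤ 1 / 3) : MC (KSState n w) where
  init := none
  trans := fun s =>
    match s with
    | none => PMF.ofFintype (ksWeight n v w v0 ε) (ksWeight_sum n v w v0 ε hw hv0 h2 hε1 hε2)
    | some none => PMF.pure (some none)
    | some (some ⟨i, j⟩) =>
        if h : (j : ℕ) + 1 < w i then PMF.pure (some (some ⟨i, ⟨(j : ℕ) + 1, h⟩⟩))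
        else PMF.pure (some (some ⟨i, j⟩))

namespace MC

variable {S : Type*} [DecidableEq S] (M : MC S)

lemma mcCylProb_cons_of_ne {s t : S} (h : t ≠ s) (r : List S) : mcCylProb M s (t :: r) = 0 := by
  simp [mcCylProb, h]

lemma mcCylProb_ofFn (p : ℕ → S) (L : ℕ) :
    mcCylProb M (p 0) (List.ofFn fun k : Fin (L + 1) => p k) =
      ∏ k : Fin L, M.trans (p k) (p (k + 1)) := by
  induction L generalizing p with
  | zero => simp [mcCylProb]
  | succ L ih =>
    have hq : (List.ofFn fun k : Fin (L + 1) => p (k + 1)) =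
        p 1 :: List.ofFn fun k : Fin L => p (k + 2) := by
      simp [List.ofFn_succ]
    rw [List.ofFn_succ]
    simp only [Fin.val_zero, Fin.val_succ, mcCylProb, if_true, one_mul]
    rw [tsum_eq_single (p 1) fun s hs => by rw [hq, mcCylProb_cons_of_ne M hs.symm, mul_zero],
      ih (fun k => p (k + 1)), Fin.prod_univ_succ]
    simp

end MC

lemma mem_MCCyl_ofFn {L : ℕ} (f : Fin L → S) (ω : MCTraj S) :
    ω ∈ MCCyl (List.ofFn f) ↔ ∀ i : Fin L, ω i = f i := by
  simp [MCCyl, Fin.forall_iff]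

lemma measurableSet_MCCyl (pre : List S) : MeasurableSet (MCCyl pre) := by
  let : MeasurableSpace S := ⊤
  have : MCCyl pre = ⋂ i : Fin pre.length, (fun ω : MCTraj S => ω i) ⁻¹' {pre.get i} := by
    ext ω; simp [MCCyl]
  rw [this]
  exact .iInter fun i => measurable_pi_apply (X := fun _ : ℕ => S) (i : ℕ) trivial

lemma singleton_eq_iInter_MCCyl (p : MCTraj S) :
    {p} = ⋂ L : ℕ, MCCyl (List.ofFn fun k : Fin (L + 1) => p k) := by
  ext ω
  simp only [Set.mem_singleton_iff, Set.mem_iInter, mem_MCCyl_ofFn]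
  exact ⟨fun h L k => h ▸ rfl, fun h => funext fun k => h k (Fin.last k)⟩

lemma antitone_MCCyl_ofFn (p : MCTraj S) :
    Antitone fun L : ℕ => MCCyl (List.ofFn fun k : Fin (L + 1) => p k) := by
  intro L L' hL ω
  simp only [mem_MCCyl_ofFn]
  exact fun h k => h (Fin.castLE (by omega) k)

instance : MeasurableSingletonClass (MCTraj S) where
  measurableSet_singleton p := by
    rw [singleton_eq_iInter_MCCyl]
    exact .iInter fun L => measurableSet_MCCyl _

namespace IsMCPathMeasure

variable [DecidableEq S] {M : MC S} {P : S → Measure (MCTraj S)}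

theorem measure_singleton (hP : IsMCPathMeasure M P) (p : MCTraj S) :
    P (p 0) {p} = ⨅ L : ℕ, ∏ k : Fin L, M.trans (p k) (p (k + 1)) := by
  have := hP.1 (p 0)
  rw [singleton_eq_iInter_MCCyl, (antitone_MCCyl_ofFn p).measure_iInter
    (fun L => (measurableSet_MCCyl _).nullMeasurableSet) ⟨0, measure_ne_top _ _⟩]
  exact iInf_congr fun L => (hP.2 _ _).trans (M.mcCylProb_ofFn p L)

theorem measure_singleton_of_trans_eq_pure (hP : IsMCPathMeasure M P) (p : MCTraj S)
    (hdet : ∀ k, M.trans (p (k + 1)) = PMF.pure (p (k + 2))) :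
    P (p 0) {p} = M.trans (p 0) (p 1) := by
  have hprod (L : ℕ) : ∏ k : Fin (L + 1), M.trans (p k) (p (k + 1)) = M.trans (p 0) (p 1) := by
    simp [Fin.prod_univ_succ, hdet]
  rw [hP.measure_singleton]
  refine le_antisymm (iInf_le_of_le 1 (hprod 0).le) (le_iInf fun L => ?_)
  cases L with
  | zero => exact (M.trans (p 0)).coe_le_one _
  | succ L => exact (hprod L).ge

end IsMCPathMeasure

open scoped Classical in
lemma measure_eq_sum_filter_measure_singleton {X ι : Type*} [MeasurableSpace X]
    [MeasurableSingletonClass X] [Fintype ι] {μ : Measure X} [IsFiniteMeasure μ] {p : ι → X}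
    (hp : Function.Injective p) (hsum : ∑ c, μ {p c} = μ Set.univ) (A : Set X) :
    μ A = ∑ c with p c ∈ A, μ {p c} := by
  have hnull : μ (Finset.univ.image p : Set X)ᶜ = 0 := by
    rw [measure_compl (Finset.measurableSet _) (measure_ne_top _ _), ← sum_measure_singleton,
      Finset.sum_image hp.injOn, hsum, tsub_self]
  rw [← measure_inter_conull hnull, ← Finset.sum_image (f := fun x => μ {x}) hp.injOn,
    sum_measure_singleton]
  congr 1
  ext x
  simp only [Set.mem_inter_iff, Finset.coe_image, Finset.coe_filter, Finset.coe_univ,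
    Set.image_univ, Set.mem_range, Set.mem_image, Set.mem_ofPred_eq, Finset.mem_univ, true_and]
  grind

section Knapsack

open scoped ENNReal

variable {n : ℕ} {v w : Fin n → ℕ} {v0 : ℕ} {ε : ℝ}

noncomputable def ksRate (v : Fin n → ℕ) (v0 : ℕ) (ε : ℝ) : ℝ :=
  ε / (((∑ i, v i : ℕ) : ℝ) - v0)

lemma ksRate_pos (hv0 : v0 < ∑ i, v i) (hε1 : 0 < ε) : 0 < ksRate v v0 ε := by
  have : (v0 : ℝ) < ((∑ i, v i : ℕ) : ℝ) := by exact_mod_cast hv0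
  exact div_pos hε1 (by linarith)

lemma ksRate_mul_sub (hv0 : v0 < ∑ i, v i) :
    ksRate v v0 ε * (((∑ i, v i : ℕ) : ℝ) - v0) = ε := by
  have : (v0 : ℝ) < ((∑ i, v i : ℕ) : ℝ) := by exact_mod_cast hv0
  exact div_mul_cancel₀ _ (by linarith)

lemma ksRate_mul_lt_iff (hv0 : v0 < ∑ i, v i) (hε1 : 0 < ε) (x : ℕ) :
    ksRate v v0 ε * x < ε ↔ x + v0 < ∑ i, v i := by
  conv_lhs => rhs; rw [← ksRate_mul_sub (ε := ε) hv0]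
  rw [mul_lt_mul_iff_right₀ (ksRate_pos hv0 hε1), lt_sub_iff_add_lt]
  exact_mod_cast Iff.rfl

lemma ofReal_le_one_sub_ksRate_mul (hv0 : v0 < ∑ i, v i) (h2 : 2 * v0 ≤ ∑ i, v i)
    (hε1 : 0 < ε) (hε2 : ε ≤ 1 / 3) :
    ENNReal.ofReal ε ≤ 1 - ENNReal.ofReal (ksRate v v0 ε) * ((∑ i, v i : ℕ) : ℝ≥0∞) := by
  have hm := ksRate_pos hv0 hε1
  have hmV : ksRate v v0 ε * ((∑ i, v i : ℕ) : ℝ) ≤ 2 * ε := by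
    have hV : ((∑ i, v i : ℕ) : ℝ) ≤ 2 * (((∑ i, v i : ℕ) : ℝ) - v0) := by
      have : 2 * (v0 : ℝ) ≤ ((∑ i, v i : ℕ) : ℝ) := by exact_mod_cast h2
      linarith
    calc ksRate v v0 ε * ((∑ i, v i : ℕ) : ℝ)
        ≤ ksRate v v0 ε * (2 * (((∑ i, v i : ℕ) : ℝ) - v0)) := by gcongr
      _ = 2 * ε := by rw [mul_left_comm, ksRate_mul_sub hv0]
  rw [← ENNReal.ofReal_natCast, ← ENNReal.ofReal_mul hm.le]
  refine (ENNReal.cancel_of_ne ENNReal.ofReal_ne_top).le_tsub_of_add_le_right ?_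
  rw [← ENNReal.ofReal_add hε1.le (by positivity), ← ENNReal.ofReal_one]
  exact ENNReal.ofReal_le_ofReal (by linarith)

/-- `ksPath hw none` is the path `ŝ s₋ s₋ ⋯` and `ksPath hw (some i)` is the path
`ŝ (i,1) (i,2) ⋯ (i,wᵢ) (i,wᵢ) ⋯`; the chain started in `ŝ` almost surely follows one of them. -/
def ksPath (hw : ∀ i, 1 ≤ w i) (c : Option (Fin n)) : MCTraj (KSState n w) := fun k =>
  match k, c with
  | 0, _ => none
  | _ + 1, none => some none
  | k + 1, some i => some (some ⟨i, ⟨min k (w i - 1), by have := hw i; omega⟩⟩)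

lemma ksPath_injective (hw : ∀ i, 1 ≤ w i) : Function.Injective (ksPath hw) := by
  intro c c' h
  have h1 := congrFun h 1
  cases c <;> cases c' <;> simp_all [ksPath]

lemma ksPath_succ_some (hw : ∀ i, 1 ≤ w i) (i : Fin n) (j : Fin (w i)) :
    ksPath hw (some i) (j + 1) = some (some ⟨i, j⟩) := by
  simp only [ksPath]
  congr
  grind

open scoped Classical in
noncomputable def ksItemsIn (C : Set (KSState n w)) : Finset (Fin n) :=
  {i | ∀ j, some (some ⟨i, j⟩) ∈ C}

/-- The set `{ŝ, s₋} ∪ {(i, j) | i ∈ I}`. -/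
def ksCore (w : Fin n → ℕ) (I : Finset (Fin n)) : Finset (KSState n w) :=
  (I.sigma fun _ => Finset.univ).insertNone.insertNone

lemma card_ksCore (I : Finset (Fin n)) : (ksCore w I).card = ∑ i ∈ I, w i + 2 := by
  simp [ksCore, Finset.card_sigma]

lemma ksItemsIn_ksCore (hw : ∀ i, 1 ≤ w i) (I : Finset (Fin n)) :
    ksItemsIn (ksCore w I : Set (KSState n w)) = I := by
  ext i
  have : Nonempty (Fin (w i)) := ⟨⟨0, hw i⟩⟩
  simp [ksItemsIn, ksCore]

lemma ksCore_ksItemsIn_subset {C : Set (KSState n w)} (h0 : none ∈ C) (h1 : some none ∈ C) :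
    (ksCore w (ksItemsIn C) : Set (KSState n w)) ⊆ C := by
  rintro (_ | _ | ⟨i, j⟩) hs
  · exact h0
  · exact h1
  · simp_all [ksCore, ksItemsIn]

variable (hw : ∀ i, 1 ≤ w i) (hv0 : v0 < ∑ i, v i) (h2 : 2 * v0 ≤ ∑ i, v i)
  (hε1 : 0 < ε) (hε2 : ε ≤ 1 / 3)

local notation "KC" => knapsackChain n v w v0 ε hw hv0 h2 hε1 hε2

lemma knapsackChain_trans_ksPath_succ (c : Option (Fin n)) (k : ℕ) :
    (KC).trans (ksPath hw c (k + 1)) = PMF.pure (ksPath hw c (k + 2)) := by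
  cases c with
  | none => rfl
  | some i =>
    have := hw i
    simp only [ksPath, knapsackChain]
    split_ifs <;> congr 1 <;> grind

lemma knapsackChain_trans_init_ksPath_none :
    (KC).trans none (ksPath hw none 1) =
      1 - ENNReal.ofReal (ksRate v v0 ε) * ((∑ i, v i : ℕ) : ℝ≥0∞) :=
  rfl

lemma knapsackChain_trans_init_ksPath_some (i : Fin n) :
    (KC).trans none (ksPath hw (some i) 1) = ENNReal.ofReal (ksRate v v0 ε) * (v i : ℝ≥0∞) := by
  rw [show (KC).trans none = PMF.ofFintype _ (ksWeight_sum n v w v0 ε hw hv0 h2 hε1 hε2) from rfl,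
    PMF.ofFintype_apply]
  simp [ksWeight, ksPath, ksRate]

lemma sum_knapsackChain_trans_init_ksPath :
    ∑ c, (KC).trans none (ksPath hw c 1) = 1 := by
  have hsink := ofReal_le_one_sub_ksRate_mul hv0 h2 hε1 hε2
  have hle : ENNReal.ofReal (ksRate v v0 ε) * ((∑ i, v i : ℕ) : ℝ≥0∞) ≤ 1 :=
    (tsub_pos_iff_lt.mp ((ENNReal.ofReal_pos.mpr hε1).trans_le hsink)).le
  simp only [Fintype.sum_option, knapsackChain_trans_init_ksPath_none,
    knapsackChain_trans_init_ksPath_some, ← Finset.mul_sum, ← Nat.cast_sum]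
  exact tsub_add_cancel_of_le hle

variable {P : KSState n w → Measure (MCTraj (KSState n w))}

lemma measure_singleton_ksPath (hP : IsMCPathMeasure KC P) (c : Option (Fin n)) :
    P none {ksPath hw c} = (KC).trans none (ksPath hw c 1) :=
  hP.measure_singleton_of_trans_eq_pure _ (knapsackChain_trans_ksPath_succ hw hv0 h2 hε1 hε2 c)

open scoped Classical in
lemma measure_init_eq_sum_ksPath (hP : IsMCPathMeasure KC P) (A : Set (MCTraj (KSState n w))) :
    P none A = ∑ c with ksPath hw c ∈ A, (KC).trans none (ksPath hw c 1) := by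
  have := hP.1 none
  simp_rw [← measure_singleton_ksPath hw hv0 h2 hε1 hε2 hP]
  refine measure_eq_sum_filter_measure_singleton (ksPath_injective hw) ?_ A
  simp_rw [measure_singleton_ksPath hw hv0 h2 hε1 hε2 hP, measure_univ]
  exact sum_knapsackChain_trans_init_ksPath hw hv0 h2 hε1 hε2

lemma mem_of_isMCCore_knapsackChain (hP : IsMCPathMeasure KC P) {C : Set (KSState n w)}
    (hC : IsMCCore KC P ε C) : none ∈ C ∧ some none ∈ C := by
  have hstay : ksPath hw none ∉ MCReach Cᶜ := fun hleave => by
    refine (ofReal_le_one_sub_ksRate_mul hv0 h2 hε1 hε2).not_gt (hC.trans_le' ?_)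
    rw [← knapsackChain_trans_init_ksPath_none hw hv0 h2 hε1 hε2,
      ← measure_singleton_ksPath hw hv0 h2 hε1 hε2 hP]
    exact measure_mono (Set.singleton_subset_iff.mpr hleave)
  exact ⟨not_not.mp fun h => hstay ⟨0, h⟩, not_not.mp fun h => hstay ⟨1, h⟩⟩

lemma ksPath_some_mem_MCReach_compl_iff {C : Set (KSState n w)} (h0 : none ∈ C) (i : Fin n) :
    ksPath hw (some i) ∈ MCReach Cᶜ ↔ ∃ j, some (some ⟨i, j⟩) ∉ C := by
  constructor
  · rintro ⟨_ | k, hk⟩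
    · exact absurd h0 hk
    · exact ⟨_, hk⟩
  · rintro ⟨j, hj⟩
    exact ⟨j + 1, by rwa [Set.mem_compl_iff, ksPath_succ_some]⟩

lemma isMCCore_knapsackChain_iff (hP : IsMCPathMeasure KC P) {C : Set (KSState n w)}
    (h0 : none ∈ C) (h1 : some none ∈ C) :
    IsMCCore KC P ε C ↔ ∑ i ∈ (ksItemsIn C)ᶜ, v i + v0 < ∑ i, v i := by
  have hsink : ksPath hw none ∉ MCReach Cᶜ := by
    rintro ⟨_ | _, hk⟩
    exacts [hk h0, hk h1]
  have hitems : ∀ i, ksPath hw (some i) ∈ MCReach Cᶜ ↔ i ∈ (ksItemsIn C)ᶜ := fun i => by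
    simp [ksPath_some_mem_MCReach_compl_iff hw h0, ksItemsIn]
  rw [IsMCCore, show (KC).init = none from rfl, measure_init_eq_sum_ksPath hw hv0 h2 hε1 hε2 hP,
    Finset.sum_filter, Fintype.sum_option, if_neg hsink, zero_add]
  simp only [hitems, ← Finset.sum_filter, Finset.filter_mem_eq_inter, Finset.univ_inter,
    knapsackChain_trans_init_ksPath_some, ← Finset.mul_sum, ← Nat.cast_sum]
  rw [← ENNReal.ofReal_natCast, ← ENNReal.ofReal_mul (ksRate_pos hv0 hε1).le,
    ENNReal.ofReal_lt_ofReal_iff hε1, ksRate_mul_lt_iff hv0 hε1]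

end Knapsack

theorem knapsack_core_reduction_general (n : ℕ) (v w : Fin n → ℕ) (v0 w0 : ℕ)
    (hw : ∀ i, 1 ≤ w i)
    (hv0 : v0 < ∑ i, v i) (h2 : 2 * v0 ≤ ∑ i, v i)
    (ε : ℝ) (hε1 : 0 < ε) (hε2 : ε ≤ 1 / 3)
    (P : KSState n w → Measure (MCTraj (KSState n w)))
    (hP : IsMCPathMeasure (knapsackChain n v w v0 ε hw hv0 h2 hε1 hε2) P) :
    (∃ C : Set (KSState n w),
        IsMCCore (knapsackChain n v w v0 ε hw hv0 h2 hε1 hε2) P ε C ∧ C.ncard ≤ w0 + 1) ↔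
      ∃ I : Finset (Fin n), v0 < ∑ i ∈ I, v i ∧ ∑ i ∈ I, w i < w0 := by
  constructor
  · rintro ⟨C, hC, hcard⟩
    obtain ⟨h0, h1⟩ := mem_of_isMCCore_knapsackChain hw hv0 h2 hε1 hε2 hP hC
    have hval := (isMCCore_knapsackChain_iff hw hv0 h2 hε1 hε2 hP h0 h1).mp hC
    have hcore := (Set.ncard_le_ncard (ksCore_ksItemsIn_subset h0 h1)).trans hcard
    rw [Set.ncard_coe_finset, card_ksCore] at hcore
    have hsplit := (ksItemsIn C).sum_compl_add_sum v
    exact ⟨ksItemsIn C, by omega, by omega⟩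
  · rintro ⟨I, hIv, hIw⟩
    refine ⟨ksCore w I, ?_, by rw [Set.ncard_coe_finset, card_ksCore]; omega⟩
    rw [isMCCore_knapsackChain_iff hw hv0 h2 hε1 hε2 hP (by simp [ksCore]) (by simp [ksCore]),
      ksItemsIn_ksCore hw]
    have hsplit := I.sum_compl_add_sum v
    omega

/-- Correctness of the knapsack reduction: the chain `knapsackChain` has an
`ε`-core of cardinality at most `w₀ + 1` if and only if there is a set `I ⊆ {1, …, n}` of
items with `Σ_{i∈I} vᵢ > v₀` and `Σ_{i∈I} wᵢ < w₀`. -/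
theorem knapsack_core_reduction (n : ℕ) (hn : 1 ≤ n) (v w : Fin n → ℕ) (v0 w0 : ℕ)
    (hv : ∀ i, 1 ≤ v i) (hw : ∀ i, 1 ≤ w i)
    (hv0 : v0 < ∑ i, v i) (h2 : 2 * v0 ≤ ∑ i, v i)
    (ε : ℝ) (hε1 : 0 < ε) (hε2 : ε ≤ 1 / 3)
    (P : KSState n w → Measure (MCTraj (KSState n w)))
    (hP : IsMCPathMeasure (knapsackChain n v w v0 ε hw hv0 h2 hε1 hε2) P) :
    (∃ C : Set (KSState n w),
        IsMCCore (knapsackChain n v w v0 ε hw hv0 h2 hε1 hε2) P ε C ∧ C.ncard ≤ w0 + 1) ↔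
      ∃ I : Finset (Fin n), v0 < ∑ i ∈ I, v i ∧ ∑ i ∈ I, w i < w0 :=
  knapsack_core_reduction_general n v w v0 w0 hw hv0 h2 ε hε1 hε2 P hP
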